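/- Let {X_n} be i.i.d. with P(X > x) ~ exp(−φ(x) + H(x)) as x → ∞, where φ : (0,∞) → (0,∞) is increasing and continuous, H(x)/φ(x) → 0, and φ^{−1}(x + o(x))/φ^{−1}(x) → 1 for every function o(x) with o(x)/x → 0. Then (max_{1≤k≤n} X_k)/φ^{−1}(log n) → 1 almost surely. -/

import Mathlib

open MeasureTheory ProbabilityTheory Filter
open scoped ENNReal

/-- `log x = ln (e ∨ x)` as in the paper. -/
noncomputable def Log (x : ℝ) : ℝ := Real.log (max (Real.exp 1) x)

/-- `pmax X n ω = max_{1 ≤ k ≤ n} X_k(ω)` (indexed `0,…,n-1`), junk value at `n = 0`. -/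
noncomputable def pmax {Ω : Type*} (X : ℕ → Ω → ℝ) (n : ℕ) (ω : Ω) : ℝ :=
  if h : n = 0 then X 0 ω
  else (Finset.range n).sup' (Finset.nonempty_range_iff.mpr h) fun k => X k ω

/-!
Write `F x = P(X > x)`, so that `F x ≈ exp (-φ x)`, and `L = Log n`. The hypothesis on
`ψ (x + o(x))` upgrades, by a diagonal argument, to a uniform one: for every `ε > 0` there is
`δ > 0` with `ψ ((1 + δ) x) ≤ (1 + ε) ψ x` and `(1 - ε) ψ x ≤ ψ ((1 - δ) x)` for large `x`.

At `b_n = ψ ((1 + δ) L)` one has `F b_n ≤ 2 n^(-(1 + δ/2))`, which is summable, so by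
Borel–Cantelli `X_n ≤ b_n` eventually and the running maximum is eventually below
`b_n ≤ (1 + ε) ψ L`. At `c_n = ψ ((1 - δ) L)` one has `n F c_n ≥ n^(δ/2) / 2`, so
`P(max_{k<n} X_k ≤ c_n) = (1 - F c_n)^n ≤ exp (-n^(δ/2) / 2)` is summable and, by Borel–Cantelli
again, the maximum eventually exceeds `c_n ≥ (1 - ε) ψ L`.
-/

open Set Real Topology Asymptotics

section Pmax

variable {Ω : Type*} (X : ℕ → Ω → ℝ) (ω : Ω) {n : ℕ}

lemma le_pmax {k : ℕ} (hk : k < n) : X k ω ≤ pmax X n ω := by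
  rw [pmax, dif_neg (by omega)]
  exact Finset.le_sup' (fun k => X k ω) (Finset.mem_range.2 hk)

lemma pmax_le_iff (hn : n ≠ 0) {c : ℝ} : pmax X n ω ≤ c ↔ ∀ k < n, X k ω ≤ c := by
  simp only [pmax, dif_neg hn, Finset.sup'_le_iff, Finset.mem_range]

lemma eventually_pmax_le {b : ℕ → ℝ} (hb : Tendsto b atTop atTop)
    (hbmono : ∀ᶠ m in atTop, ∀ n ≥ m, b m ≤ b n) (hX : ∀ᶠ n in atTop, X n ω ≤ b n) :
    ∀ᶠ n in atTop, pmax X n ω ≤ b n := by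
  obtain ⟨N, hN⟩ := eventually_atTop.1 (hX.and hbmono)
  filter_upwards [hb.eventually_ge_atTop (pmax X (N + 1) ω), eventually_gt_atTop N]
    with n hpmax hNn
  refine (pmax_le_iff X ω (by omega)).2 fun k hk => ?_
  rcases le_or_gt k N with hkN | hNk
  · exact (le_pmax X ω (Nat.lt_succ_of_le hkN)).trans hpmax
  · exact (hN k hNk.le).1.trans ((hN k hNk.le).2 n hk.le)

end Pmax

lemma one_le_Log (x : ℝ) : 1 ≤ Log x := by
  simpa [Log] using log_le_log (exp_pos 1) (le_max_left (exp 1) x)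

lemma Log_monotone : Monotone Log := fun _ _ hab =>
  log_le_log (lt_of_lt_of_le (exp_pos 1) (le_max_left _ _)) (max_le_max le_rfl hab)

lemma tendsto_Log_natCast_atTop : Tendsto (fun n : ℕ => Log n) atTop atTop :=
  (tendsto_log_atTop.comp (tendsto_atTop_mono (le_max_right _) tendsto_id)).comp
    tendsto_natCast_atTop_atTop

lemma exp_mul_Log_natCast {n : ℕ} (hn : 3 ≤ n) (a : ℝ) : exp (a * Log n) = (n : ℝ) ^ a := by
  have he : exp 1 ≤ n := by
    have : (3 : ℝ) ≤ n := by exact_mod_cast hn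
    linarith [exp_one_lt_d9]
  rw [Log, max_eq_right he, rpow_def_of_pos (by positivity), mul_comm]

lemma summable_exp_neg_mul_rpow {c s : ℝ} (hc : 0 < c) (hs : 0 < s) :
    Summable fun n : ℕ => exp (-(c * (n : ℝ) ^ s)) := by
  refine (summable_nat_rpow.2 (show (-2 : ℝ) < -1 by norm_num)).of_norm_bounded_eventually_nat ?_
  filter_upwards [tendsto_natCast_atTop_atTop.eventually
    ((isLittleO_log_rpow_atTop hs).bound (half_pos hc)), eventually_gt_atTop 0] with n hlog hn
  have hn1 : (1 : ℝ) ≤ n := by exact_mod_cast hn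
  rw [norm_of_nonneg (log_nonneg hn1), norm_of_nonneg (by positivity)] at hlog
  rw [norm_of_nonneg (exp_pos _).le, rpow_def_of_pos (show (0 : ℝ) < n by positivity) (-2),
    exp_le_exp]
  linarith

lemma eventually_le_two_mul_and_le_two_mul {α : Type*} {l : Filter α} {f g : α → ℝ}
    (hg : ∀ x, 0 < g x) (h : Tendsto (fun x => f x / g x) l (𝓝 1)) :
    ∀ᶠ x in l, f x ≤ 2 * g x ∧ g x ≤ 2 * f x := by
  filter_upwards [h.eventually_lt_const one_lt_two,
    h.eventually_const_lt (show (1 / 2 : ℝ) < 1 by norm_num)] with x hlt hgt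
  rw [div_lt_iff₀ (hg x)] at hlt
  rw [lt_div_iff₀ (hg x)] at hgt
  constructor <;> linarith

lemma tendsto_atTop_of_isLittleO_of_tendsto_exp {α : Type*} {l : Filter α} {φ H : α → ℝ}
    (hφ : ∀ᶠ x in l, 0 < φ x) (hH : H =o[l] φ)
    (hexp : Tendsto (fun x => exp (-φ x + H x)) l (𝓝 0)) : Tendsto φ l atTop := by
  have hlim : Tendsto (fun x => (2 / 3) * -(-φ x + H x)) l atTop :=
    (tendsto_neg_atBot_atTop.comp (tendsto_exp_comp_nhds_zero.1 hexp)).const_mul_atTop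
      (by norm_num)
  refine tendsto_atTop_mono' l ?_ hlim
  filter_upwards [hφ, hH.bound (show (0 : ℝ) < 1 / 2 by norm_num)] with x hpos hbound
  rw [norm_of_nonneg hpos.le, Real.norm_eq_abs] at hbound
  linarith [neg_abs_le (H x)]

theorem exists_pos_eventually_forall_abs_sub_lt {F : ℝ → ℝ → ℝ}
    (hF : ∀ g : ℝ → ℝ, Tendsto g atTop (𝓝 0) → Tendsto (fun x => F x (g x)) atTop (𝓝 1))
    {ε : ℝ} (hε : 0 < ε) : ∃ δ > 0, ∀ᶠ x in atTop, ∀ t, |t| ≤ δ → |F x t - 1| < ε := by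
  by_contra! hbad
  have hchoice : ∀ k : ℕ, ∃ x t : ℝ, k ≤ x ∧ |t| ≤ 1 / ((k : ℝ) + 1) ∧ ε ≤ |F x t - 1| := by
    intro k
    obtain ⟨x, hkx, t, ht⟩ :=
      (hbad (1 / ((k : ℝ) + 1)) (by positivity)).forall_exists_of_atTop (k : ℝ)
    exact ⟨x, t, hkx, ht⟩
  choose x t hxk htk hbadk using hchoice
  classical
  -- The diagonal counterexample: `g (x k) = t k` up to repetitions among the `x k`, so `g → 0`
  -- while `F (x k) (g (x k))` stays `ε` away from `1`.
  let g : ℝ → ℝ := fun y => if h : ∃ k, x k = y then t h.choose else 0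
  have hg : Tendsto g atTop (𝓝 0) := by
    refine Metric.tendsto_nhds.2 fun η hη => ?_
    obtain ⟨K, hK⟩ := exists_nat_one_div_lt hη
    filter_upwards [(Finset.range K).eventually_all.2 fun k _ => eventually_gt_atTop (x k)]
      with y hy
    rw [Real.dist_0_eq_abs]
    by_cases h : ∃ k, x k = y
    · have hKk : K ≤ h.choose := by
        by_contra! hlt
        exact (hy _ (Finset.mem_range.2 hlt)).ne h.choose_spec
      simp only [g, dif_pos h]
      calc |t h.choose| ≤ 1 / (h.choose + 1) := htk _
        _ ≤ 1 / (K + 1) := by gcongr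
        _ < η := hK
    · simpa [g, dif_neg h] using hη
  have hx : Tendsto x atTop atTop := tendsto_atTop_mono hxk tendsto_natCast_atTop_atTop
  obtain ⟨k, hk⟩ := (((hF g hg).comp hx).eventually
    (Metric.ball_mem_nhds 1 hε)).exists
  have h : ∃ j, x j = x k := ⟨k, rfl⟩
  have hgk : g (x k) = t h.choose := dif_pos h
  have := hbadk h.choose
  rw [h.choose_spec, ← hgk] at this
  exact (not_lt.2 this) hk

theorem exists_eventually_apply_one_add_mul_le_and_le {ψ : ℝ → ℝ}
    (hψreg : ∀ g : ℝ → ℝ, Tendsto (fun x => g x / x) atTop (𝓝 0) →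
        Tendsto (fun x => ψ (x + g x) / ψ x) atTop (𝓝 1))
    (hψpos : ∀ᶠ x in atTop, 0 < ψ x) {ε : ℝ} (hε : 0 < ε) :
    ∃ δ ∈ Ioo (0 : ℝ) 1, ∀ᶠ x in atTop,
      ψ ((1 + δ) * x) ≤ (1 + ε) * ψ x ∧ (1 - ε) * ψ x ≤ ψ ((1 - δ) * x) := by
  have hF : ∀ g : ℝ → ℝ, Tendsto g atTop (𝓝 0) →
      Tendsto (fun x => ψ (x + g x * x) / ψ x) atTop (𝓝 1) := fun g hg =>
    hψreg (fun x => g x * x) (hg.congr' <| (eventually_ne_atTop 0).mono fun x hx =>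
      (mul_div_cancel_right₀ (g x) hx).symm)
  obtain ⟨δ, hδ, hunif⟩ :=
    exists_pos_eventually_forall_abs_sub_lt (F := fun x t => ψ (x + t * x) / ψ x) hF hε
  set d := min δ (1 / 2)
  have hd : 0 < d := by positivity
  refine ⟨d, ⟨hd, by linarith [min_le_right δ (1 / 2)]⟩, ?_⟩
  have hdδ : |d| ≤ δ := by
    rw [abs_of_pos hd]
    exact min_le_left _ _
  filter_upwards [hunif, hψpos] with x hx hpos
  have hup := (abs_sub_lt_iff.1 (hx d hdδ)).1
  have hlow := (abs_sub_lt_iff.1 (hx (-d) (by rwa [abs_neg]))).2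
  rw [sub_lt_iff_lt_add', div_lt_iff₀ hpos] at hup
  rw [sub_lt_comm, lt_div_iff₀ hpos] at hlow
  rw [show (1 + d) * x = x + d * x by ring, show (1 - d) * x = x + -d * x by ring]
  exact ⟨hup.le, hlow.le⟩

section Inverse

variable {φ ψ : ℝ → ℝ}

lemma leftInvOn_and_mapsTo_Ici (hφcont : ContinuousOn φ (Ioi 0))
    (hφtop : Tendsto φ atTop atTop) (hψinv : ∀ x : ℝ, 0 < x → ψ (φ x) = x) :
    LeftInvOn φ ψ (Ici (φ 1)) ∧ MapsTo ψ (Ici (φ 1)) (Ici 1) := by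
  have hsurj := intermediate_value_Ici (hφcont.mono fun x (hx : 1 ≤ x) => one_pos.trans_le hx)
    hφtop
  refine ⟨fun y hy => ?_, fun y hy => ?_⟩ <;> obtain ⟨a, ha, rfl⟩ := hsurj hy <;>
    rw [hψinv a (one_pos.trans_le ha)]
  exact ha

lemma monotoneOn_of_leftInvOn {s : Set ℝ} (hφmono : StrictMonoOn φ (Ioi 0))
    (hinv : LeftInvOn φ ψ s) (hmaps : MapsTo ψ s (Ioi 0)) : MonotoneOn ψ s := by
  intro y hy z hz hyz
  rw [← hφmono.le_iff_le (hmaps hy) (hmaps hz), hinv hy, hinv hz]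
  exact hyz

lemma tendsto_atTop_of_leftInvOn {a : ℝ} (hφmono : StrictMonoOn φ (Ioi 0))
    (hinv : LeftInvOn φ ψ (Ici a)) (hmaps : MapsTo ψ (Ici a) (Ioi 0)) :
    Tendsto ψ atTop atTop := by
  refine tendsto_atTop.2 fun C => ?_
  filter_upwards [eventually_ge_atTop a, eventually_ge_atTop (φ (max C 1))] with y hya hy
  rw [← hinv hya, hφmono.le_iff_le (mem_Ioi.2 (lt_max_of_lt_right one_pos)) (hmaps hya)] at hy
  exact (le_max_left C 1).trans hy

end Inverse

lemma tendsto_measureReal_lt_atTop {Ω : Type*} [MeasurableSpace Ω] (μ : Measure Ω)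
    [IsFiniteMeasure μ] {f : Ω → ℝ} (hf : Measurable f) :
    Tendsto (fun x : ℝ => μ.real {ω | x < f ω}) atTop (𝓝 0) := by
  have h := tendsto_measure_iInter_atTop (μ := μ) (s := fun x : ℝ => {ω | x < f ω})
    (fun x => (hf measurableSet_Ioi).nullMeasurableSet)
    (fun x y hxy ω (hω : y < f ω) => hxy.trans_lt hω) ⟨0, measure_ne_top _ _⟩
  rw [iInter_eq_empty_iff.2 fun ω => ⟨f ω, lt_irrefl (f ω)⟩, measure_empty] at h
  exact (ENNReal.tendsto_toReal ENNReal.zero_ne_top).comp h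

lemma ae_eventually_notMem_of_summable {α : Type*} [MeasurableSpace α] {μ : Measure α}
    [IsFiniteMeasure μ] {s : ℕ → Set α} (hs : Summable fun n => μ.real (s n)) :
    ∀ᵐ ω ∂μ, ∀ᶠ n in atTop, ω ∉ s n := by
  refine ae_eventually_notMem ?_
  have hreal : (fun n => μ (s n)) = fun n => ENNReal.ofReal (μ.real (s n)) :=
    funext fun n => (ofReal_measureReal (measure_ne_top μ _)).symm
  rw [hreal, ← ENNReal.ofReal_tsum_of_nonneg (fun n => measureReal_nonneg) hs]
  exact ENNReal.ofReal_ne_top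

section TailEstimates

variable {F φ ψ H : ℝ → ℝ}

lemma eventually_exp_le_and_le_exp_comp
    (hF : ∀ᶠ x in atTop, F x ≤ 2 * exp (-φ x + H x) ∧ exp (-φ x + H x) ≤ 2 * F x)
    (hH : H =o[atTop] φ) (hψtop : Tendsto ψ atTop atTop) (hφψ : ∀ᶠ y in atTop, φ (ψ y) = y)
    {κ η : ℝ} (hκ : 0 < κ) (hη : 0 < η) :
    ∀ᶠ y in atTop, exp (-(κ + η) * y) ≤ 2 * F (ψ (κ * y)) ∧
      F (ψ (κ * y)) ≤ 2 * exp (-(κ - η) * y) := by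
  have hκy : Tendsto (fun y => κ * y) atTop atTop := tendsto_id.const_mul_atTop hκ
  filter_upwards [hκy.eventually (hψtop.eventually hF),
    hκy.eventually (hψtop.eventually (hH.bound (div_pos hη hκ))), hκy.eventually hφψ,
    eventually_ge_atTop 0] with y hFy hHy hφy hy
  rw [hφy] at hFy hHy
  rw [Real.norm_eq_abs, Real.norm_eq_abs, abs_of_nonneg (show 0 ≤ κ * y by positivity),
    show η / κ * (κ * y) = η * y by field_simp] at hHy
  have hlo : -(κ + η) * y ≤ -(κ * y) + H (ψ (κ * y)) := by
    linarith [neg_abs_le (H (ψ (κ * y)))]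
  have hhi : -(κ * y) + H (ψ (κ * y)) ≤ -(κ - η) * y := by
    linarith [le_abs_self (H (ψ (κ * y)))]
  exact ⟨(exp_le_exp.2 hlo).trans hFy.2, hFy.1.trans (by gcongr)⟩

lemma summable_comp_mul_Log (hF0 : ∀ x, 0 ≤ F x)
    (hF : ∀ᶠ x in atTop, F x ≤ 2 * exp (-φ x + H x) ∧ exp (-φ x + H x) ≤ 2 * F x)
    (hH : H =o[atTop] φ) (hψtop : Tendsto ψ atTop atTop) (hφψ : ∀ᶠ y in atTop, φ (ψ y) = y)
    {δ : ℝ} (hδ : 0 < δ) : Summable fun n : ℕ => F (ψ ((1 + δ) * Log n)) := by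
  refine ((summable_nat_rpow.2 (show -(1 + δ / 2) < -1 by linarith)).mul_left 2
    ).of_norm_bounded_eventually_nat ?_
  filter_upwards [tendsto_Log_natCast_atTop.eventually (eventually_exp_le_and_le_exp_comp hF hH
    hψtop hφψ (κ := 1 + δ) (η := δ / 2) (by positivity) (by positivity)),
    eventually_ge_atTop 3] with n hn hn3
  rw [norm_of_nonneg (hF0 _), ← exp_mul_Log_natCast hn3]
  convert hn.2 using 4
  ring

lemma summable_exp_neg_mul_comp_mul_Log
    (hF : ∀ᶠ x in atTop, F x ≤ 2 * exp (-φ x + H x) ∧ exp (-φ x + H x) ≤ 2 * F x)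
    (hH : H =o[atTop] φ) (hψtop : Tendsto ψ atTop atTop) (hφψ : ∀ᶠ y in atTop, φ (ψ y) = y)
    {δ : ℝ} (hδ0 : 0 < δ) (hδ1 : δ < 1) :
    Summable fun n : ℕ => exp (-(n * F (ψ ((1 - δ) * Log n)))) := by
  refine (summable_exp_neg_mul_rpow (c := 1 / 2) (s := δ / 2) (by norm_num) (by positivity)
    ).of_norm_bounded_eventually_nat ?_
  filter_upwards [tendsto_Log_natCast_atTop.eventually (eventually_exp_le_and_le_exp_comp hF hH
    hψtop hφψ (κ := 1 - δ) (η := δ / 2) (by linarith) (by positivity)),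
    eventually_ge_atTop 3] with n hn hn3
  have hlow := hn.1
  rw [exp_mul_Log_natCast hn3] at hlow
  have hn0 : (n : ℝ) ≠ 0 := by positivity
  have hpow : (n : ℝ) ^ (δ / 2) = (n : ℝ) ^ (-(1 - δ + δ / 2)) * n := by
    rw [← rpow_add_one hn0]
    ring_nf
  rw [norm_of_nonneg (exp_pos _).le, exp_le_exp, neg_le_neg_iff, hpow]
  nlinarith [show (0 : ℝ) ≤ n by positivity]

end TailEstimates

section Maxima

variable {Ω : Type*} [MeasurableSpace Ω] {μ : Measure Ω} [IsProbabilityMeasure μ]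
  {X : ℕ → Ω → ℝ}

lemma ae_eventually_pmax_le (hident : ∀ n, IdentDistrib (X n) (X 0) μ μ) {b : ℕ → ℝ}
    (hb : Tendsto b atTop atTop) (hbmono : ∀ᶠ m in atTop, ∀ n ≥ m, b m ≤ b n)
    (hsum : Summable fun n => μ.real {ω | b n < X 0 ω}) :
    ∀ᵐ ω ∂μ, ∀ᶠ n in atTop, pmax X n ω ≤ b n := by
  have hsame : ∀ n, μ.real {ω | b n < X n ω} = μ.real {ω | b n < X 0 ω} := fun n =>
    congrArg ENNReal.toReal ((hident n).measure_mem_eq measurableSet_Ioi)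
  filter_upwards [ae_eventually_notMem_of_summable (s := fun n => {ω | b n < X n ω})
    (by simpa only [hsame] using hsum)] with ω hω
  exact eventually_pmax_le X ω hb hbmono (hω.mono fun n hn => not_lt.1 hn)

lemma measureReal_pmax_le (hmeas : Measurable (X 0)) (hindep : iIndepFun X μ)
    (hident : ∀ n, IdentDistrib (X n) (X 0) μ μ) {n : ℕ} (hn : n ≠ 0) (c : ℝ) :
    μ.real {ω | pmax X n ω ≤ c} = (1 - μ.real {ω | c < X 0 ω}) ^ n := by
  have hset : {ω | pmax X n ω ≤ c} = ⋂ k ∈ Finset.range n, X k ⁻¹' Iic c := by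
    ext ω
    simp [pmax_le_iff X ω hn]
  have hprod : μ {ω | pmax X n ω ≤ c} = μ (X 0 ⁻¹' Iic c) ^ n := by
    rw [hset, hindep.meas_biInter fun k _ => ⟨Iic c, measurableSet_Iic, rfl⟩,
      Finset.prod_congr rfl fun k _ => (hident k).measure_mem_eq measurableSet_Iic,
      Finset.prod_const, Finset.card_range]
  have hcompl : X 0 ⁻¹' Iic c = {ω | c < X 0 ω}ᶜ := by
    ext ω
    simp
  have hm : MeasurableSet {ω | c < X 0 ω} := hmeas measurableSet_Ioi
  rw [measureReal_def, hprod, ENNReal.toReal_pow, ← measureReal_def, hcompl,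
    probReal_compl_eq_one_sub hm]

lemma ae_eventually_lt_pmax (hmeas : Measurable (X 0)) (hindep : iIndepFun X μ)
    (hident : ∀ n, IdentDistrib (X n) (X 0) μ μ) {c : ℕ → ℝ}
    (hsum : Summable fun n : ℕ => exp (-(n * μ.real {ω | c n < X 0 ω}))) :
    ∀ᵐ ω ∂μ, ∀ᶠ n in atTop, c n < pmax X n ω := by
  have hbound : ∀ᶠ n in atTop, ‖μ.real {ω | pmax X n ω ≤ c n}‖ ≤
      exp (-(n * μ.real {ω | c n < X 0 ω})) := by
    filter_upwards [eventually_ne_atTop 0] with n hn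
    rw [norm_of_nonneg measureReal_nonneg, measureReal_pmax_le hmeas hindep hident hn,
      ← mul_neg, exp_nat_mul]
    exact pow_le_pow_left₀ (sub_nonneg.2 measureReal_le_one) (one_sub_le_exp_neg _) n
  filter_upwards [ae_eventually_notMem_of_summable (hsum.of_norm_bounded_eventually_nat hbound)]
    with ω hω
  exact hω.mono fun n hn => not_le.1 hn

end Maxima

lemma tendsto_div_of_forall_eventually_mul_le {a b : ℕ → ℝ} (hb : ∀ᶠ n in atTop, 0 < b n)
    (h : ∀ m : ℕ, ∀ᶠ n in atTop,
      (1 - 1 / ((m : ℝ) + 1)) * b n ≤ a n ∧ a n ≤ (1 + 1 / ((m : ℝ) + 1)) * b n) :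
    Tendsto (fun n => a n / b n) atTop (𝓝 1) := by
  refine Metric.tendsto_nhds.2 fun ε hε => ?_
  obtain ⟨m, hm⟩ := exists_nat_one_div_lt hε
  filter_upwards [h m, hb] with n ⟨hlo, hhi⟩ hpos
  rw [Real.dist_eq, abs_sub_lt_iff, sub_lt_iff_lt_add', div_lt_iff₀ hpos, sub_lt_comm,
    lt_div_iff₀ hpos]
  constructor <;> nlinarith

lemma ae_eventually_mul_le_pmax_and_pmax_le {Ω : Type*} [MeasurableSpace Ω] {μ : Measure Ω}
    [IsProbabilityMeasure μ] {X : ℕ → Ω → ℝ} {φ ψ H : ℝ → ℝ} (hmeas : Measurable (X 0))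
    (hindep : iIndepFun X μ) (hident : ∀ n, IdentDistrib (X n) (X 0) μ μ)
    (hφmono : StrictMonoOn φ (Ioi 0)) (hinv : LeftInvOn φ ψ (Ici (φ 1)))
    (hmaps : MapsTo ψ (Ici (φ 1)) (Ioi 0))
    (hψreg : ∀ g : ℝ → ℝ, Tendsto (fun x => g x / x) atTop (𝓝 0) →
        Tendsto (fun x => ψ (x + g x) / ψ x) atTop (𝓝 1))
    (hH : H =o[atTop] φ)
    (hF : ∀ᶠ x in atTop, μ.real {ω | x < X 0 ω} ≤ 2 * exp (-φ x + H x) ∧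
      exp (-φ x + H x) ≤ 2 * μ.real {ω | x < X 0 ω})
    {ε : ℝ} (hε : 0 < ε) :
    ∀ᵐ ω ∂μ, ∀ᶠ n : ℕ in atTop,
      (1 - ε) * ψ (Log n) ≤ pmax X n ω ∧ pmax X n ω ≤ (1 + ε) * ψ (Log n) := by
  have hψtop := tendsto_atTop_of_leftInvOn hφmono hinv hmaps
  have hφψ : ∀ᶠ y in atTop, φ (ψ y) = y := (eventually_ge_atTop (φ 1)).mono hinv
  have hψpos : ∀ᶠ y in atTop, 0 < ψ y := (eventually_ge_atTop (φ 1)).mono hmaps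
  have hκLog (κ : ℝ) (hκ : 0 < κ) : Tendsto (fun n : ℕ => κ * Log n) atTop atTop :=
    tendsto_Log_natCast_atTop.const_mul_atTop hκ
  obtain ⟨δ, ⟨hδ0, hδ1⟩, hreg⟩ := exists_eventually_apply_one_add_mul_le_and_le hψreg hψpos hε
  have hmono : ∀ᶠ m : ℕ in atTop, ∀ n ≥ m, ψ ((1 + δ) * Log m) ≤ ψ ((1 + δ) * Log n) := by
    filter_upwards [(hκLog (1 + δ) (by positivity)).eventually_ge_atTop (φ 1)] with m hm n hmn
    have hLog : (1 + δ) * Log m ≤ (1 + δ) * Log n := by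
      gcongr
      exact Log_monotone (Nat.cast_le.2 hmn)
    exact monotoneOn_of_leftInvOn hφmono hinv hmaps hm (hm.trans hLog) hLog
  filter_upwards [ae_eventually_lt_pmax hmeas hindep hident
      (summable_exp_neg_mul_comp_mul_Log hF hH hψtop hφψ hδ0 hδ1),
    ae_eventually_pmax_le hident (hψtop.comp (hκLog (1 + δ) (by positivity))) hmono
      (summable_comp_mul_Log (fun _ => measureReal_nonneg) hF hH hψtop hφψ hδ0)] with ω hlow hup
  filter_upwards [hlow, hup, tendsto_Log_natCast_atTop.eventually hreg] with n hl hu hr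
  exact ⟨hr.2.trans hl.le, hu.trans hr.1⟩

theorem stmt18 {Ω : Type*} [MeasurableSpace Ω] (μ : Measure Ω) [IsProbabilityMeasure μ]
    (X : ℕ → Ω → ℝ) (hmeas : ∀ n, Measurable (X n))
    (hindep : iIndepFun X μ)
    (hident : ∀ n, IdentDistrib (X n) (X 0) μ μ)
    (φ ψ H : ℝ → ℝ)
    (hφpos : ∀ x : ℝ, 0 < x → 0 < φ x)
    (hφmono : StrictMonoOn φ (Set.Ioi (0 : ℝ)))
    (hφcont : ContinuousOn φ (Set.Ioi (0 : ℝ)))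
    (hψinv : ∀ x : ℝ, 0 < x → ψ (φ x) = x)
    (hψreg : ∀ g : ℝ → ℝ, Tendsto (fun x => g x / x) atTop (nhds 0) →
        Tendsto (fun x => ψ (x + g x) / ψ x) atTop (nhds 1))
    (hH : Tendsto (fun x => H x / φ x) atTop (nhds 0))
    (htail : Tendsto (fun x : ℝ =>
        (μ {ω | X 0 ω > x}).toReal / Real.exp (-φ x + H x)) atTop (nhds 1)) :
    ∀ᵐ ω ∂μ, Tendsto (fun n : ℕ => pmax X n ω / ψ (Log n)) atTop (nhds 1) := by
  have hφpos' : ∀ᶠ x in atTop, 0 < φ x := (eventually_gt_atTop 0).mono hφpos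
  have hHφ : H =o[atTop] φ :=
    (isLittleO_iff_tendsto' (hφpos'.mono fun x hx h0 => (hx.ne' h0).elim)).2 hH
  have hF := eventually_le_two_mul_and_le_two_mul (fun x => exp_pos _) htail
  have hφtop : Tendsto φ atTop atTop := by
    refine tendsto_atTop_of_isLittleO_of_tendsto_exp hφpos' hHφ (squeeze_zero'
      (Eventually.of_forall fun x => (exp_pos _).le) (hF.mono fun x hx => hx.2) ?_)
    have h0 := (tendsto_measureReal_lt_atTop μ (hmeas 0)).const_mul 2
    rwa [mul_zero] at h0
  obtain ⟨hinv, hmaps⟩ := leftInvOn_and_mapsTo_Ici hφcont hφtop hψinv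
  have hmaps' : MapsTo ψ (Ici (φ 1)) (Ioi 0) := hmaps.mono_right (Ici_subset_Ioi.2 one_pos)
  have hbounds (m : ℕ) := ae_eventually_mul_le_pmax_and_pmax_le (hmeas 0) hindep hident hφmono
    hinv hmaps' hψreg hHφ hF (ε := 1 / ((m : ℝ) + 1)) (by positivity)
  filter_upwards [ae_all_iff.2 hbounds] with ω hω
  exact tendsto_div_of_forall_eventually_mul_le
    (tendsto_Log_natCast_atTop.eventually ((eventually_ge_atTop (φ 1)).mono hmaps')) hω
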